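/- Let μ be a probability measure and (S̄_t)_{t≥0} a sub-Markovian semigroup of operators on bounded measurable functions, and suppose 0 < m := ∫_0^∞ (∫ S̄_t 1 dμ) dt < ∞. Assume that for every bounded measurable φ, (1/m)·∫_0^∞ (∫ S̄_t φ dμ) dt = ∫ φ dμ. Then for every s ≥ 0 and every bounded measurable φ, ∫ S̄_s φ dμ = exp(-s/m)·∫ φ dμ. -/

import Mathlib

open MeasureTheory Set

/-!
Put `g t = ∫ S_t φ dμ`. The fixed-point identity applied to `S_u φ`, together with the semigroup
law, gives the renewal identity `m g(u) = ∫_u^∞ g` for `u ≥ 0`. If `g` is integrable, the right-hand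
side is continuous with right derivative `-g`, so `e^{u/m} g(u)` is constant. The Bochner integral
of a non-integrable function is `0`, so wherever `g` fails to be integrable on `(u, ∞)` the identity
forces `g(u) = 0`; between such points and a point of integrability `g` is therefore either `0` or
the explicit exponential, hence integrable after all.
-/

theorem eq_exp_mul_of_hasDerivWithinAt_Ici {f : ℝ → ℝ} {k a b : ℝ} (hab : a ≤ b)
    (hcont : ContinuousOn f (Icc a b))
    (hderiv : ∀ x ∈ Ico a b, HasDerivWithinAt f (k * f x) (Ici x) x) :
    f b = Real.exp (k * (b - a)) * f a := by
  have hconst := constant_of_has_deriv_right_zero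
    (f := fun x => Real.exp (-(k * (x - a))) * f x)
    (by fun_prop) (fun x hx => by
      have hexp : HasDerivAt (fun x => Real.exp (-(k * (x - a))))
          (Real.exp (-(k * (x - a))) * -k) x := by
        simpa using (((hasDerivAt_id x).sub_const a).const_mul k).neg.exp
      exact (hexp.hasDerivWithinAt.mul (hderiv x hx)).congr_deriv (by ring)) b ⟨hab, le_rfl⟩
  simp only [sub_self, mul_zero, neg_zero, Real.exp_zero, one_mul] at hconst
  rw [← hconst, ← mul_assoc, ← Real.exp_add, add_neg_cancel, Real.exp_zero, one_mul]

theorem setIntegral_Ioi_comp_add_right {E : Type*} [NormedAddCommGroup E] [NormedSpace ℝ E]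
    (f : ℝ → E) (b u : ℝ) : ∫ t in Ioi b, f (t + u) = ∫ t in Ioi (b + u), f t := by
  simpa using (measurePreserving_add_right volume u).setIntegral_preimage_emb
    (measurableEmbedding_addRight u) f (Ioi (b + u))

section RenewalIdentity

variable {g : ℝ → ℝ} {m a : ℝ}

theorem hasDerivWithinAt_setIntegral_Ioi (hg : IntegrableOn g (Ioi a))
    (hcont : ContinuousOn g (Ici a)) {x : ℝ} (hx : a ≤ x) :
    HasDerivWithinAt (fun s => ∫ t in Ioi s, g t) (-g x) (Ici x) x := by
  have hsub : Ioi x ⊆ Ici a := Ioi_subset_Ici_self.trans (Ici_subset_Ici.2 hx)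
  have hprim : HasDerivWithinAt (fun s => ∫ t in a..s, g t) (g x) (Ici x) x :=
    intervalIntegral.integral_hasDerivWithinAt_right
      ((intervalIntegrable_iff_integrableOn_Ioc_of_le hx).2 (hg.mono_set Ioc_subset_Ioi_self))
      ((hcont.mono hsub).stronglyMeasurableAtFilter_nhdsWithin measurableSet_Ioi x)
      ((hcont x hx).mono hsub)
  refine (hprim.const_sub (∫ t in Ioi a, g t)).congr (fun s hs => ?_) ?_
  · exact (intervalIntegral.integral_Ioi_sub_Ioi hg (hx.trans hs)).symm ▸ by ring
  · exact (intervalIntegral.integral_Ioi_sub_Ioi hg hx).symm ▸ by ring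

theorem eq_exp_mul_of_integrableOn_Ioi (hm : 0 < m) (hg : IntegrableOn g (Ioi a))
    (htail : ∀ s, a ≤ s → m * g s = ∫ t in Ioi s, g t) {s : ℝ} (hs : a ≤ s) :
    g s = Real.exp (-(s - a) / m) * g a := by
  set G : ℝ → ℝ := fun s => ∫ t in Ioi s, g t
  have hgG : EqOn g (fun s => G s / m) (Ici a) := fun s hs => by
    simp only [G, ← htail s hs]; field_simp
  have hgcont : ContinuousOn g (Ici a) :=
    ((hg.continuousOn_Ici_primitive_Ioi).div_const m).congr hgG
  have hG := eq_exp_mul_of_hasDerivWithinAt_Ici (f := G) (k := -1 / m) hs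
    ((hg.continuousOn_Ici_primitive_Ioi).mono Icc_subset_Ici_self)
    (fun x hx => (hasDerivWithinAt_setIntegral_Ioi hg hgcont hx.1).congr_deriv (by
      simp only [G, ← htail x hx.1]; field_simp))
  simp only [G, ← htail s hs, ← htail a le_rfl] at hG
  rw [← mul_left_cancel_iff_of_pos hm, hG]
  ring_nf

theorem eq_zero_of_not_integrableOn_Ioi (hm : 0 < m)
    (htail : ∀ s, a ≤ s → m * g s = ∫ t in Ioi s, g t) {s : ℝ} (hs : a ≤ s)
    (hg : ¬IntegrableOn g (Ioi s)) : g s = 0 := by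
  simpa [integral_undef hg, hm.ne'] using htail s hs

theorem integrableOn_Ioi_of_mul_eq_setIntegral_Ioi (hm : 0 < m)
    (htail : ∀ s, a ≤ s → m * g s = ∫ t in Ioi s, g t) {s : ℝ} (hs : a ≤ s)
    (hg : IntegrableOn g (Ioi s)) : IntegrableOn g (Ioi a) := by
  set I : Set ℝ := {u | IntegrableOn g (Ioi u)}
  have hI : IsUpperSet I := fun u v huv hu => hu.mono_set (Ioi_subset_Ioi huv)
  have hgI : EqOn g (I.indicator fun u => Real.exp ((s - u) / m) * g s) (Ioc a s) := by
    intro u hu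
    by_cases huI : u ∈ I
    · rw [indicator_of_mem huI, eq_exp_mul_of_integrableOn_Ioi hm huI
        (fun v hv => htail v (hu.1.le.trans hv)) hu.2, ← mul_assoc, ← Real.exp_add, neg_div,
        add_neg_cancel, Real.exp_zero, one_mul]
    · rw [indicator_of_notMem huI, eq_zero_of_not_integrableOn_Ioi hm htail hu.1.le huI]
  have hIoc : IntegrableOn g (Ioc a s) :=
    ((Continuous.integrableOn_Ioc (by fun_prop)).indicator
      hI.ordConnected.measurableSet).congr_fun hgI.symm measurableSet_Ioc
  exact Ioc_union_Ioi_eq_Ioi hs ▸ hIoc.union hg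

theorem eq_exp_mul_of_mul_eq_setIntegral_Ioi (hm : 0 < m)
    (htail : ∀ s, a ≤ s → m * g s = ∫ t in Ioi s, g t) {s : ℝ} (hs : a ≤ s) :
    g s = Real.exp (-(s - a) / m) * g a := by
  by_cases hg : IntegrableOn g (Ioi s)
  · exact eq_exp_mul_of_integrableOn_Ioi hm
      (integrableOn_Ioi_of_mul_eq_setIntegral_Ioi hm htail hs hg) htail hs
  · have hga : ¬IntegrableOn g (Ioi a) := fun h => hg (h.mono_set (Ioi_subset_Ioi hs))
    rw [eq_zero_of_not_integrableOn_Ioi hm htail hs hg,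
      eq_zero_of_not_integrableOn_Ioi hm htail le_rfl hga, mul_zero]

end RenewalIdentity

theorem stmt5_general {Ω : Type*} [MeasurableSpace Ω] (μ : Measure Ω) [IsProbabilityMeasure μ]
    (S : ℝ → (Ω → ℝ) → (Ω → ℝ)) (m : ℝ)
    (hS : ∀ t : ℝ, 0 ≤ t → ∀ φ : Ω → ℝ, Measurable φ → (∃ C, ∀ x, |φ x| ≤ C) →
      Measurable (S t φ) ∧ ∃ C, ∀ x, |S t φ x| ≤ C)
    (hsemi : ∀ t s : ℝ, 0 ≤ t → 0 ≤ s → ∀ φ : Ω → ℝ, S (t + s) φ = S t (S s φ))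
    (hS0 : ∀ φ : Ω → ℝ, S 0 φ = φ)
    (hm0 : 0 < m)
    (hfix : ∀ φ : Ω → ℝ, Measurable φ → (∃ C, ∀ x, |φ x| ≤ C) →
      (1 / m) * (∫ t in Ioi (0 : ℝ), (∫ x, S t φ x ∂μ)) = ∫ x, φ x ∂μ) :
    ∀ s : ℝ, 0 ≤ s → ∀ φ : Ω → ℝ, Measurable φ → (∃ C, ∀ x, |φ x| ≤ C) →
      ∫ x, S s φ x ∂μ = Real.exp (-s / m) * ∫ x, φ x ∂μ := by
  intro s hs φ hφ hφb
  set g : ℝ → ℝ := fun t => ∫ x, S t φ x ∂μ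
  have htail : ∀ u, 0 ≤ u → m * g u = ∫ t in Ioi u, g t := fun u hu => by
    obtain ⟨hmeas, hbdd⟩ := hS u hu φ hφ hφb
    have hshift : ∫ t in Ioi (0 : ℝ), (∫ x, S t (S u φ) x ∂μ) = ∫ t in Ioi u, g t := by
      rw [← zero_add u, ← setIntegral_Ioi_comp_add_right, zero_add]
      exact setIntegral_congr_fun measurableSet_Ioi fun t ht => by
        simp only [g, hsemi t u (le_of_lt ht) hu]
    have hfixu : 1 / m * ∫ t in Ioi u, g t = g u := hshift ▸ hfix (S u φ) hmeas hbdd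
    rw [← hfixu]
    field_simp
  simpa [g, hS0] using eq_exp_mul_of_mul_eq_setIntegral_Ioi hm0 htail hs

/-- A sub-Markovian semigroup `S` acting on bounded measurable functions,
for which a probability measure `μ` is a fixed point of the normalized
Laplace-transform map, makes the killing time exponential. -/
theorem stmt5 {Ω : Type*} [MeasurableSpace Ω] (μ : Measure Ω) [IsProbabilityMeasure μ]
    (S : ℝ → (Ω → ℝ) → (Ω → ℝ)) (m : ℝ)
    (hS : ∀ t : ℝ, 0 ≤ t → ∀ φ : Ω → ℝ, Measurable φ → (∃ C, ∀ x, |φ x| ≤ C) →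
      Measurable (S t φ) ∧ ∃ C, ∀ x, |S t φ x| ≤ C)
    (hsemi : ∀ t s : ℝ, 0 ≤ t → 0 ≤ s → ∀ φ : Ω → ℝ, S (t + s) φ = S t (S s φ))
    (hS0 : ∀ φ : Ω → ℝ, S 0 φ = φ)
    (hpos : ∀ t : ℝ, 0 ≤ t → ∀ φ : Ω → ℝ, (∀ x, 0 ≤ φ x) → ∀ x, 0 ≤ S t φ x)
    (hsub : ∀ t : ℝ, 0 ≤ t → ∀ x, S t (fun _ => (1 : ℝ)) x ≤ 1)
    (hm : m = ∫ t in Ioi (0 : ℝ), (∫ x, S t (fun _ => (1 : ℝ)) x ∂μ))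
    (hm0 : 0 < m)
    (hfix : ∀ φ : Ω → ℝ, Measurable φ → (∃ C, ∀ x, |φ x| ≤ C) →
      (1 / m) * (∫ t in Ioi (0 : ℝ), (∫ x, S t φ x ∂μ)) = ∫ x, φ x ∂μ) :
    ∀ s : ℝ, 0 ≤ s → ∀ φ : Ω → ℝ, Measurable φ → (∃ C, ∀ x, |φ x| ≤ C) →
      ∫ x, S s φ x ∂μ = Real.exp (-s / m) * ∫ x, φ x ∂μ :=
  stmt5_general μ S m hS hsemi hS0 hm0 hfix
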